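/- arXiv:2502.03648 — 8 statements merged into one kernel-verified Lean document; each statement's English description precedes it below -/
import Mathlib

section
/- Let φ : A → ℝ be a function on a set A ⊆ ℝ and suppose a ∈ A with φ(a) ≠ 0. Then the number of sign changes of φ on A equals the sum of the number of sign changes of φ on A ∩ (-∞, a] and the number of sign changes of φ on A ∩ [a, ∞). Here the number of sign changes sc(φ, S) is the supremum of all k ∈ ℕ such that there exist points θ_k < θ_{k-1} < ⋯ < θ_0 in S with φ(θ_i)·φ(θ_{i-1}) < 0 for 1 ≤ i ≤ k (with sup ∅ = 0). -/
open Set Filter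

/-- The number of sign changes of `φ` on the set `A`, valued in `ℕ∞`:
the supremum of all `k` such that there is a strictly decreasing chain
`θ_k < θ_{k-1} < ⋯ < θ_0` in `A` with `φ(θ_i)·φ(θ_{i-1}) < 0`. -/
noncomputable def signChanges (φ : ℝ → ℝ) (A : Set ℝ) : ℕ∞ :=
  sSup {m : ℕ∞ | ∃ k : ℕ, m = (k : ℕ∞) ∧ ∃ θ : Fin (k + 1) → ℝ,
    (∀ i, θ i ∈ A) ∧ (∀ i j : Fin (k + 1), i < j → θ j < θ i) ∧
    ∀ i : Fin k, φ (θ i.succ) * φ (θ i.castSucc) < 0}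

/-!
A chain of sign changes in `A` splits at `a` into a chain below `a` and a chain above `a`,
losing at most the one sign change that straddles `a`; as `φ a ≠ 0`, the value `φ a` has the
opposite sign to one of the two points around the junction, so adjoining `a` to that side
recovers it. Conversely, a chain below `a` can be made to start at `a` (replace its top point by
`a` if it has the sign of `φ a`, otherwise put `a` on top), symmetrically a chain above `a` can be
made to end at `a`, and the two normalized chains concatenate at `a`.
-/

lemma mul_neg_of_mul_neg_of_mul_nonneg {R : Type*} [CommRing R] [LinearOrder R]
    [IsStrictOrderedRing R] {p q r : R} (hpq : p * q < 0) (hqr : 0 ≤ q * r)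
    (hr : r ≠ 0) : p * r < 0 := by
  have hq : q ≠ 0 := by rintro rfl; simp at hpq
  have hqr' : 0 < q * r := hqr.lt_of_ne (mul_ne_zero hq hr).symm
  nlinarith [mul_pos hqr' (mul_self_pos.2 hq)]

theorem ENat.iSup_eq_iSup_add_iSup {ι κ μ : Sort*} [Nonempty κ] [Nonempty μ] {f : ι → ℕ∞}
    {g : κ → ℕ∞} {h : μ → ℕ∞} (hle : ∀ i, ∃ j k, f i ≤ g j + h k)
    (hge : ∀ j k, ∃ i, g j + h k ≤ f i) : ⨆ i, f i = (⨆ j, g j) + ⨆ k, h k := by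
  refine le_antisymm (iSup_le fun i => ?_) (ENat.iSup_add_iSup_le fun j k => ?_)
  · obtain ⟨j, k, hi⟩ := hle i
    exact hi.trans (add_le_add (le_iSup g j) (le_iSup h k))
  · obtain ⟨i, hi⟩ := hge j k
    exact hi.trans (le_iSup f i)

section

variable {α : Type*} [LinearOrder α] {φ : α → ℝ} {A B : Set α} {a : α} {l l₁ l₂ : List α}

lemma List.Pairwise.exists_eq_append_of_gt (hl : l.Pairwise (· > ·)) (a : α) :
    ∃ u w, l = u ++ w ∧ (∀ x ∈ u, a < x) ∧ ∀ x ∈ w, x ≤ a := by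
  induction l with
  | nil => exact ⟨[], [], rfl, by simp, by simp⟩
  | cons x t ih =>
    obtain ⟨hxt, ht⟩ := List.pairwise_cons.1 hl
    by_cases hax : a < x
    · obtain ⟨u, w, rfl, hu, hw⟩ := ih ht
      exact ⟨x :: u, w, rfl, by simpa [hax] using hu, hw⟩
    · refine ⟨[], x :: t, rfl, by simp, ?_⟩
      simp only [List.mem_cons, forall_eq_or_imp]
      exact ⟨not_lt.1 hax, fun y hy => ((hxt y hy).trans_le (not_lt.1 hax)).le⟩

lemma lt_of_le_of_mul_neg {x y : α} (hxy : x ≤ y) (h : φ x * φ y < 0) : x < y :=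
  hxy.lt_of_ne fun e => (e ▸ h).not_ge (mul_self_nonneg _)

/-- Lists are read from the largest point down; the list `l` exhibits `l.length - 1` sign
changes. -/
def IsSignChain (φ : α → ℝ) (A : Set α) (l : List α) : Prop :=
  (∀ x ∈ l, x ∈ A) ∧ l.IsChain fun x y => y < x ∧ φ y * φ x < 0

instance (φ : α → ℝ) (A : Set α) : Nonempty {l : List α // IsSignChain φ A l} :=
  ⟨⟨[], by simp [IsSignChain]⟩⟩

lemma isSignChain_append :
    IsSignChain φ A (l₁ ++ l₂) ↔ IsSignChain φ A l₁ ∧ IsSignChain φ A l₂ ∧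
      ∀ x ∈ l₁.getLast?, ∀ y ∈ l₂.head?, y < x ∧ φ y * φ x < 0 := by
  simp only [IsSignChain, List.isChain_append, List.mem_append, or_imp, forall_and]
  tauto

lemma isSignChain_cons :
    IsSignChain φ A (a :: l) ↔ a ∈ A ∧ (∀ y ∈ l.head?, y < a ∧ φ y * φ a < 0) ∧
      IsSignChain φ A l := by
  simp only [IsSignChain, List.isChain_cons, List.mem_cons, forall_eq_or_imp]
  tauto

lemma isSignChain_concat :
    IsSignChain φ A (l ++ [a]) ↔ IsSignChain φ A l ∧ a ∈ A ∧
      ∀ x ∈ l.getLast?, a < x ∧ φ a * φ x < 0 := by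
  rw [isSignChain_append]
  simp [IsSignChain]

namespace IsSignChain

lemma mono (hl : IsSignChain φ A l) (hAB : A ⊆ B) : IsSignChain φ B l :=
  ⟨fun x hx => hAB (hl.1 x hx), hl.2⟩

lemma inter (hl : IsSignChain φ A l) (hB : ∀ x ∈ l, x ∈ B) : IsSignChain φ (A ∩ B) l :=
  ⟨fun x hx => ⟨hl.1 x hx, hB x hx⟩, hl.2⟩

lemma exists_cons_of_isGreatest (hl : IsSignChain φ B l) (hB : IsGreatest B a) (hφa : φ a ≠ 0) :
    ∃ t, IsSignChain φ B (a :: t) ∧ l.length ≤ t.length + 1 := by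
  rcases l with _ | ⟨x, t⟩
  · exact ⟨[], by simp [hB.1, IsSignChain], by simp⟩
  obtain ⟨hxB, htop, ht⟩ := isSignChain_cons.1 hl
  by_cases hxa : φ x * φ a < 0
  · refine ⟨x :: t, isSignChain_cons.2 ⟨hB.1, ?_, hl⟩, by simp⟩
    simpa using ⟨lt_of_le_of_mul_neg (hB.2 hxB) hxa, hxa⟩
  · refine ⟨t, isSignChain_cons.2 ⟨hB.1, fun y hy => ?_, ht⟩, by simp⟩
    obtain ⟨hyx, hyφ⟩ := htop y hy
    exact ⟨hyx.trans_le (hB.2 hxB), mul_neg_of_mul_neg_of_mul_nonneg hyφ (not_lt.1 hxa) hφa⟩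

lemma exists_concat_of_isLeast (hl : IsSignChain φ B l) (hB : IsLeast B a) (hφa : φ a ≠ 0) :
    ∃ s, IsSignChain φ B (s ++ [a]) ∧ l.length ≤ s.length + 1 := by
  rcases l.eq_nil_or_concat' with rfl | ⟨t, x, rfl⟩
  · exact ⟨[], by simp [hB.1, IsSignChain], by simp⟩
  obtain ⟨ht, hxB, hbot⟩ := isSignChain_concat.1 hl
  by_cases hax : φ a * φ x < 0
  · refine ⟨t ++ [x], isSignChain_concat.2 ⟨hl, hB.1, ?_⟩, by simp⟩
    simpa using ⟨lt_of_le_of_mul_neg (hB.2 hxB) hax, hax⟩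
  · refine ⟨t, isSignChain_concat.2 ⟨ht, hB.1, fun y hy => ?_⟩, by simp⟩
    obtain ⟨hxy, hxφ⟩ := hbot y hy
    refine ⟨(hB.2 hxB).trans_lt hxy, ?_⟩
    rw [mul_comm] at hxφ ⊢
    exact mul_neg_of_mul_neg_of_mul_nonneg hxφ (by rw [mul_comm]; exact not_lt.1 hax) hφa

lemma append_cons (h₁ : IsSignChain φ A (l₁ ++ [a])) (h₂ : IsSignChain φ A (a :: l₂)) :
    IsSignChain φ A (l₁ ++ a :: l₂) := by
  obtain ⟨h₁, -, hjoin⟩ := isSignChain_concat.1 h₁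
  exact isSignChain_append.2 ⟨h₁, h₂, by simpa using hjoin⟩

lemma exists_split (hl : IsSignChain φ A l) (ha : a ∈ A) (hφa : φ a ≠ 0) :
    ∃ l₁ l₂, IsSignChain φ (A ∩ Iic a) l₁ ∧ IsSignChain φ (A ∩ Ici a) l₂ ∧
      l.length + 1 ≤ l₁.length + l₂.length := by
  have hanti : l.Pairwise (· > ·) := List.isChain_iff_pairwise.1 (hl.2.imp fun _ _ h => h.1)
  obtain ⟨u, w, rfl, hu, hw⟩ := hanti.exists_eq_append_of_gt a
  obtain ⟨hu_chain, hw_chain, hjoin⟩ := isSignChain_append.1 hl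
  have hu' : IsSignChain φ (A ∩ Ici a) u := hu_chain.inter fun x hx => (hu x hx).le
  have hw' : IsSignChain φ (A ∩ Iic a) w := hw_chain.inter hw
  by_cases hhead : ∀ y ∈ w.head?, φ y * φ a < 0
  · refine ⟨a :: w, u, isSignChain_cons.2 ⟨⟨ha, self_mem_Iic⟩, fun y hy => ?_, hw'⟩, hu', by simp; omega⟩
    exact ⟨lt_of_le_of_mul_neg (hw y (List.mem_of_mem_head? hy)) (hhead y hy), hhead y hy⟩
  · push Not at hhead
    obtain ⟨y, hy, hya⟩ := hhead
    refine ⟨w, u ++ [a], hw', isSignChain_concat.2 ⟨hu', ⟨ha, self_mem_Ici⟩, fun x hx => ?_⟩, by simp; omega⟩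
    refine ⟨hu x (List.mem_of_getLast? hx), ?_⟩
    have hyx := (hjoin x hx y hy).2
    rw [mul_comm] at hyx ⊢
    exact mul_neg_of_mul_neg_of_mul_nonneg hyx hya hφa

end IsSignChain

lemma isSignChain_ofFn_iff {k : ℕ} {θ : Fin (k + 1) → α} :
    IsSignChain φ A (List.ofFn θ) ↔ (∀ i, θ i ∈ A) ∧ StrictAnti θ ∧
      ∀ i : Fin k, φ (θ i.succ) * φ (θ i.castSucc) < 0 := by
  simp only [IsSignChain, List.forall_mem_ofFn_iff, List.isChain_ofFn, Fin.strictAnti_iff_succ_lt,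
    Fin.forall_iff, Fin.succ_mk, Fin.castSucc_mk, Nat.add_lt_add_iff_right, forall_and]

end

/-- The empty list contributes `0 - 1 = 0`, which changes no supremum in `ℕ∞`. -/
lemma signChanges_eq_iSup (φ : ℝ → ℝ) (A : Set ℝ) :
    signChanges φ A = ⨆ l : {l : List ℝ // IsSignChain φ A l}, ((l.1.length - 1 : ℕ) : ℕ∞) := by
  refine le_antisymm (sSup_le ?_) (iSup_le fun ⟨l, hl⟩ => ?_)
  · rintro _ ⟨k, rfl, θ, hθ⟩
    exact le_iSup_of_le ⟨List.ofFn θ, isSignChain_ofFn_iff.2 hθ⟩ (by simp)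
  · rcases l with _ | ⟨x, t⟩
    · simp
    rw [← List.ofFn_get (x :: t)] at hl
    exact le_sSup ⟨t.length, by simp, _, isSignChain_ofFn_iff.1 hl⟩

theorem signChanges_split (φ : ℝ → ℝ) (A : Set ℝ) (a : ℝ)
    (ha : a ∈ A) (hφa : φ a ≠ 0) :
    signChanges φ A =
      signChanges φ (A ∩ Set.Iic a) + signChanges φ (A ∩ Set.Ici a) := by
  simp only [signChanges_eq_iSup]
  refine ENat.iSup_eq_iSup_add_iSup (fun ⟨l, hl⟩ => ?_) (fun ⟨l₁, hl₁⟩ ⟨l₂, hl₂⟩ => ?_)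
  · obtain ⟨l₁, l₂, h₁, h₂, hlen⟩ := hl.exists_split ha hφa
    exact ⟨⟨l₁, h₁⟩, ⟨l₂, h₂⟩, by dsimp only; norm_cast; omega⟩
  · obtain ⟨t, ht, htlen⟩ := hl₁.exists_cons_of_isGreatest ⟨⟨ha, self_mem_Iic⟩, fun _ hx => hx.2⟩ hφa
    obtain ⟨s, hs, hslen⟩ := hl₂.exists_concat_of_isLeast ⟨⟨ha, self_mem_Ici⟩, fun _ hx => hx.2⟩ hφa
    refine ⟨⟨s ++ a :: t, (hs.mono inter_subset_left).append_cons (ht.mono inter_subset_left)⟩, ?_⟩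
    dsimp only
    norm_cast
    simp only [List.length_append, List.length_cons]
    omega
end

section
/- Let K = [-r, 0] ∪ {1, …, N} ⊆ ℝ for some r > 0 and N ∈ ℕ, and let φ : K → ℝ be continuous with φ ≢ 0. Let a ∈ [-r, 0), let (φ_n) be continuous functions K → ℝ, none identically zero, converging uniformly to φ, and let (a_n) be a sequence in [-r, 0) with a_n → a. Then sc(φ, [a,0] ∪ {1,…,N}) ≤ liminf_{n→∞} sc(φ_n, [a_n,0] ∪ {1,…,N}), where sc denotes the number of sign changes (valued in ℕ ∪ {∞}). -/
open Set Filter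

/-- The set `{1, …, N}` viewed inside `ℝ`. -/
def intPart (N : ℕ) : Set ℝ := {x : ℝ | ∃ i : ℕ, 1 ≤ i ∧ i ≤ N ∧ x = (i : ℝ)}

open Topology

/-!
Given `k` sign changes of `φ` at points `θ₀ > ⋯ > θₖ` of `[a, 0] ∪ {1, …, N}`, the values
`φ (θᵢ)` are nonzero, so uniform (even pointwise) convergence makes `φₙ` change sign at the
same points for large `n`. The only obstruction to using these points for `φₙ` is that `θₖ = a`
may lie left of `aₙ`; since `φ a ≠ 0`, continuity of `φ` lets us first move `θₖ` slightly to
the right of `a`, and then `aₙ < θₖ` eventually.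
-/

structure IsSignChain_s1 (φ : ℝ → ℝ) (A : Set ℝ) {k : ℕ} (θ : Fin (k + 1) → ℝ) : Prop where
  mem : ∀ i, θ i ∈ A
  strictAnti : StrictAnti θ
  mul_neg : ∀ i : Fin k, φ (θ i.succ) * φ (θ i.castSucc) < 0

section SignChanges

variable {φ : ℝ → ℝ} {A : Set ℝ} {k : ℕ} {θ : Fin (k + 1) → ℝ}

theorem IsSignChain_s1.le_signChanges (h : IsSignChain_s1 φ A θ) : (k : ℕ∞) ≤ signChanges φ A :=
  le_sSup ⟨k, rfl, θ, h.mem, h.strictAnti, h.mul_neg⟩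

theorem signChanges_le_iff {m : ℕ∞} :
    signChanges φ A ≤ m ↔
      ∀ (k : ℕ) (θ : Fin (k + 1) → ℝ), IsSignChain_s1 φ A θ → (k : ℕ∞) ≤ m := by
  refine ⟨fun h k θ hθ => hθ.le_signChanges.trans h, fun h => sSup_le ?_⟩
  rintro _ ⟨k, rfl, θ, hmem, hanti, hneg⟩
  exact h k θ ⟨hmem, hanti, hneg⟩

theorem IsSignChain_s1.last_le (h : IsSignChain_s1 φ A θ) (i : Fin (k + 1)) :
    θ (Fin.last k) ≤ θ i :=
  h.strictAnti.antitone (Fin.le_last i)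

theorem IsSignChain_s1.of_forall_mem {B : Set ℝ} (h : IsSignChain_s1 φ A θ) (hB : ∀ i, θ i ∈ B) :
    IsSignChain_s1 φ B θ :=
  ⟨hB, h.strictAnti, h.mul_neg⟩

theorem IsSignChain_s1.Icc_union_of_le_last {a a' b : ℝ} {S : Set ℝ}
    (h : IsSignChain_s1 φ (Icc a b ∪ S) θ) (ha' : a' ≤ θ (Fin.last k)) :
    IsSignChain_s1 φ (Icc a' b ∪ S) θ := by
  refine h.of_forall_mem fun i => ?_
  rcases h.mem i with hi | hi
  · exact Or.inl ⟨ha'.trans (h.last_le i), hi.2⟩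
  · exact Or.inr hi

theorem IsSignChain_s1.eventually {ι : Type*} {l : Filter ι} {f : ι → ℝ → ℝ}
    (h : IsSignChain_s1 φ A θ) (hf : ∀ x ∈ A, Tendsto (fun n => f n x) l (𝓝 (φ x))) :
    ∀ᶠ n in l, IsSignChain_s1 (f n) A θ := by
  have hneg : ∀ i : Fin k, ∀ᶠ n in l, f n (θ i.succ) * f n (θ i.castSucc) < 0 := fun i =>
    ((hf _ (h.mem _)).mul (hf _ (h.mem _))).eventually (eventually_lt_nhds (h.mul_neg i))
  exact (eventually_all.2 hneg).mono fun n hn => ⟨h.mem, h.strictAnti, hn⟩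

end SignChanges

theorem IsSignChain_s1.update_last {φ : ℝ → ℝ} {A : Set ℝ} {k : ℕ} {θ : Fin (k + 2) → ℝ}
    (h : IsSignChain_s1 φ A θ) {x : ℝ} (hx : x ∈ A) (hxθ : x < θ (Fin.last k).castSucc)
    (hxφ : φ x * φ (θ (Fin.last k).castSucc) < 0) :
    IsSignChain_s1 φ A (Function.update θ (Fin.last (k + 1)) x) := by
  have hprev : (Fin.last k).castSucc ≠ Fin.last (k + 1) := (Fin.castSucc_lt_last _).ne
  refine ⟨fun i => ?_, fun i j hij => ?_, fun i => ?_⟩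
  · rcases eq_or_ne i (Fin.last (k + 1)) with rfl | hi
    · simpa using hx
    · simpa [hi] using h.mem i
  · have hi : i ≠ Fin.last (k + 1) := (hij.trans_le (Fin.le_last j)).ne
    rcases eq_or_ne j (Fin.last (k + 1)) with rfl | hj
    · have hi' : i ≤ (Fin.last k).castSucc := Fin.le_castSucc_iff.2 (by simpa using hij)
      simpa [hi] using hxθ.trans_le (h.strictAnti.antitone hi')
    · simpa [hi, hj] using h.strictAnti hij
  · have hi : i.castSucc ≠ Fin.last (k + 1) := (Fin.castSucc_lt_last i).ne
    rcases eq_or_ne i (Fin.last k) with rfl | hi'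
    · simpa [hprev] using hxφ
    · have hs : i.succ ≠ Fin.last (k + 1) := by simpa using hi'
      simpa [hi, hs] using h.mul_neg i

theorem IsSignChain_s1.exists_last_ne {φ : ℝ → ℝ} {A : Set ℝ} {k : ℕ} {θ : Fin (k + 2) → ℝ}
    {a : ℝ} (h : IsSignChain_s1 φ A θ) (hA : A ∈ 𝓝[>] a) (hφ : ContinuousWithinAt φ A a) :
    ∃ θ' : Fin (k + 2) → ℝ, IsSignChain_s1 φ A θ' ∧ θ' (Fin.last (k + 1)) ≠ a := by
  rcases ne_or_eq (θ (Fin.last (k + 1))) a with hne | hlast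
  · exact ⟨θ, h, hne⟩
  set p := θ (Fin.last k).castSucc
  have hap : a < p := hlast ▸ h.strictAnti (Fin.castSucc_lt_last _)
  have hneg : φ a * φ p < 0 := by simpa [hlast] using h.mul_neg (Fin.last k)
  have hφp : ∀ᶠ x in 𝓝[>] a, φ x * φ p < 0 :=
    ((hφ.mono_of_mem_nhdsWithin hA).tendsto.mul_const _).eventually (eventually_lt_nhds hneg)
  have hltp : ∀ᶠ x in 𝓝[>] a, x < p := (eventually_lt_nhds hap).filter_mono nhdsWithin_le_nhds
  obtain ⟨x, hxA, hxa, hxp, hxφ⟩ :=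
    ((eventually_mem_set.2 hA).and <| eventually_mem_nhdsWithin.and <| hltp.and hφp).exists
  exact ⟨_, h.update_last hxA hxp hxφ, by simpa using (mem_Ioi.1 hxa).ne'⟩

theorem intPart_subset_Ici_one (N : ℕ) : intPart N ⊆ Ici 1 := by
  rintro _ ⟨i, hi, -, rfl⟩
  exact mem_Ici.2 (mod_cast hi)

theorem signChanges_liminf_le_general (r : ℝ) (N : ℕ)
    (φ : ℝ → ℝ) (φn : ℕ → ℝ → ℝ) (a : ℝ) (an : ℕ → ℝ)
    (K : Set ℝ) (hK : K = Set.Icc (-r) 0 ∪ intPart N)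
    (hφ : ContinuousOn φ K)
    (hconv : TendstoUniformlyOn φn φ atTop K)
    (hamem : a ∈ Set.Ico (-r) 0)
    (han : Tendsto an atTop (nhds a)) :
    signChanges φ (Set.Icc a 0 ∪ intPart N) ≤
      Filter.liminf (fun n => signChanges (φn n) (Set.Icc (an n) 0 ∪ intPart N))
        Filter.atTop := by
  have hAK : Icc a 0 ∪ intPart N ⊆ K :=
    hK ▸ union_subset_union_left _ (Icc_subset_Icc_left hamem.1)
  refine signChanges_le_iff.2 fun k θ hθ => ?_
  rcases k with _ | k
  · simp
  obtain ⟨θ', hθ', hne⟩ := hθ.exists_last_ne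
    (mem_of_superset (Icc_mem_nhdsGT hamem.2) subset_union_left)
    (hφ.mono hAK _ (Or.inl ⟨le_rfl, hamem.2.le⟩))
  have ha_lt : a < θ' (Fin.last (k + 1)) := by
    rcases hθ'.mem (Fin.last (k + 1)) with hmem | hmem
    · exact lt_of_le_of_ne hmem.1 hne.symm
    · exact hamem.2.trans_le (zero_le_one.trans (intPart_subset_Ici_one N hmem))
  refine le_liminf_of_le (by isBoundedDefault) ?_
  filter_upwards [hθ'.eventually fun x hx => hconv.tendsto_at (hAK hx),
    han.eventually (eventually_lt_nhds ha_lt)] with n hn hlt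
  exact (hn.Icc_union_of_le_last hlt.le).le_signChanges

/-- Lower semicontinuity of the sign-change count, jointly in the function
(uniform convergence on `K = [-r,0] ∪ {1,…,N}`) and the left endpoint. -/
theorem signChanges_liminf_le (r : ℝ) (hr : 0 < r) (N : ℕ)
    (φ : ℝ → ℝ) (φn : ℕ → ℝ → ℝ) (a : ℝ) (an : ℕ → ℝ)
    (K : Set ℝ) (hK : K = Set.Icc (-r) 0 ∪ intPart N)
    (hφ : ContinuousOn φ K) (hφ0 : ∃ s ∈ K, φ s ≠ 0)
    (hφn : ∀ n, ContinuousOn (φn n) K)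
    (hφn0 : ∀ n, ∃ s ∈ K, φn n s ≠ 0)
    (hconv : TendstoUniformlyOn φn φ atTop K)
    (hamem : a ∈ Set.Ico (-r) 0) (hanmem : ∀ n, an n ∈ Set.Ico (-r) (0:ℝ))
    (han : Tendsto an atTop (nhds a)) :
    signChanges φ (Set.Icc a 0 ∪ intPart N) ≤
      Filter.liminf (fun n => signChanges (φn n) (Set.Icc (an n) 0 ∪ intPart N))
        Filter.atTop :=
  signChanges_liminf_le_general r N φ φn a an K hK hφ hconv hamem han
end

section
/- Let f : ℝ × ℝ × ℝ → ℝ be continuous in its first argument and C¹ in the others, satisfying the feedback condition v·f(t, 0, v) > 0 for all t ∈ ℝ and v ≠ 0. Let x, z : I → ℝ be C¹ on an interval I with ẋ(t) = f(t, x(t), z(t)) on I. Define a(t) = ∫₀¹ D₂f(t, h·x(t), z(t)) dh and b(t) = ∫₀¹ D₃f(t, 0, h·z(t)) dh. Then (i) ẋ(t) = a(t)x(t) + b(t)z(t) for all t ∈ I, and (ii) b(t) > 0 for all t ∈ I. -/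
/-!
Along the solution, write `f(t, x, z) = f(t, 0, z) + (f(t, x, z) - f(t, 0, z))` and apply the
fundamental theorem of calculus to `h ↦ f(t, h x, z)` and `h ↦ f(t, 0, h z)` on `[0, 1]`; the
feedback condition forces `f(t, 0, 0) = 0`, so the two integrals are exactly `a x` and `b z`.
For `z ≠ 0` this gives `b z² = z f(t, 0, z) > 0`, and for `z = 0` the coefficient `b` is
`D₃f(t, 0, 0) > 0`.
-/

open Set Filter Topology intervalIntegral

theorem ContDiff.eq_add_integral_deriv_mul {g : ℝ → ℝ} (hg : ContDiff ℝ 1 g) (X : ℝ) :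
    g X = g 0 + (∫ h in (0:ℝ)..1, deriv g (h * X)) * X := by
  have hderiv : ∀ h : ℝ, HasDerivAt (fun h => g (h * X)) (deriv g (h * X) * X) h := fun h =>
    (hg.differentiable one_ne_zero _).hasDerivAt.comp h
      (by simpa using (hasDerivAt_id h).mul_const X)
  have hcont : Continuous fun h : ℝ => deriv g (h * X) :=
    (hg.continuous_deriv le_rfl).comp (continuous_id.mul continuous_const)
  have hftc := integral_eq_sub_of_hasDerivAt (fun h _ => hderiv h)
    ((hcont.mul continuous_const).intervalIntegrable 0 1)
  rw [integral_mul_const, one_mul, zero_mul] at hftc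
  linarith

theorem eq_zero_of_continuousAt_of_mul_pos {g : ℝ → ℝ} (hg : ContinuousAt g 0)
    (hpos : ∀ v, v ≠ 0 → 0 < v * g v) : g 0 = 0 := by
  have hright : ∀ᶠ v in 𝓝[>] (0:ℝ), 0 ≤ g v := by
    filter_upwards [self_mem_nhdsWithin] with v (hv : 0 < v)
    exact (pos_of_mul_pos_right (hpos v hv.ne') hv.le).le
  have hleft : ∀ᶠ v in 𝓝[<] (0:ℝ), g v ≤ 0 := by
    filter_upwards [self_mem_nhdsWithin] with v (hv : v < 0)
    exact (neg_of_mul_pos_right (hpos v hv.ne) hv.le).le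
  exact le_antisymm
    (le_of_tendsto (hg.tendsto.mono_left nhdsWithin_le_nhds) hleft)
    (ge_of_tendsto (hg.tendsto.mono_left nhdsWithin_le_nhds) hright)

theorem integral_deriv_mul_pos {g : ℝ → ℝ} (hg : ContDiff ℝ 1 g) (hg0 : g 0 = 0)
    (hpos : ∀ v, v ≠ 0 → 0 < v * g v) (hderiv : 0 < deriv g 0) (X : ℝ) :
    0 < ∫ h in (0:ℝ)..1, deriv g (h * X) := by
  rcases eq_or_ne X 0 with rfl | hX
  · simpa using hderiv
  · have hgX : g X = (∫ h in (0:ℝ)..1, deriv g (h * X)) * X := by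
      simpa [hg0] using hg.eq_add_integral_deriv_mul X
    have hsq := hpos X hX
    rw [hgX, ← mul_assoc, mul_comm X, mul_assoc, ← sq] at hsq
    exact pos_of_mul_pos_left hsq (sq_nonneg X)

theorem linearization_along_solution_general
    (f : ℝ → ℝ → ℝ → ℝ)
    (hfC1 : ∀ t, ContDiff ℝ 1 (fun p : ℝ × ℝ => f t p.1 p.2))
    (hfb : ∀ t v, v ≠ 0 → 0 < v * f t 0 v)
    (hfb' : ∀ t, 0 < deriv (fun v => f t 0 v) 0)
    (I : Set ℝ) (x z : ℝ → ℝ)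
    (hx : ∀ t ∈ I, HasDerivAt x (f t (x t) (z t)) t)
    (a b : ℝ → ℝ)
    (hadef : ∀ t, a t = ∫ h in (0:ℝ)..1, deriv (fun u => f t u (z t)) (h * x t))
    (hbdef : ∀ t, b t = ∫ h in (0:ℝ)..1, deriv (fun v => f t 0 v) (h * z t)) :
    (∀ t ∈ I, HasDerivAt x (a t * x t + b t * z t) t) ∧
    (∀ t ∈ I, 0 < b t) := by
  have hfu : ∀ t v, ContDiff ℝ 1 (fun u => f t u v) := fun t v =>
    (hfC1 t).comp (contDiff_id.prodMk contDiff_const)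
  have hfv : ∀ t, ContDiff ℝ 1 (fun v => f t 0 v) := fun t =>
    (hfC1 t).comp (contDiff_const.prodMk contDiff_id)
  have hf0 : ∀ t, f t 0 0 = 0 := fun t =>
    eq_zero_of_continuousAt_of_mul_pos (hfv t).continuous.continuousAt (hfb t)
  have hlin : ∀ t, f t (x t) (z t) = a t * x t + b t * z t := by
    intro t
    have hxpart := (hfu t (z t)).eq_add_integral_deriv_mul (x t)
    have hzpart := (hfv t).eq_add_integral_deriv_mul (z t)
    rw [← hadef t] at hxpart
    rw [← hbdef t, hf0 t] at hzpart
    linarith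
  refine ⟨fun t ht => hlin t ▸ hx t ht, fun t _ => ?_⟩
  rw [hbdef t]
  exact integral_deriv_mul_pos (hfv t) (hf0 t) (hfb t) (hfb' t) (z t)

/-- Linearization along a solution: writing
`a(t) = ∫₀¹ D₂f(t, h x(t), z(t)) dh` and `b(t) = ∫₀¹ D₃f(t, 0, h z(t)) dh`,
a solution of `ẋ = f(t, x, z)` solves `ẋ = a x + b z`, and `b > 0`. -/
theorem linearization_along_solution
    (f : ℝ → ℝ → ℝ → ℝ)
    (hft : ∀ u v, Continuous (fun t => f t u v))
    (hfC1 : ∀ t, ContDiff ℝ 1 (fun p : ℝ × ℝ => f t p.1 p.2))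
    (hfb : ∀ t v, v ≠ 0 → 0 < v * f t 0 v)
    (hfb' : ∀ t, 0 < deriv (fun v => f t 0 v) 0)
    (I : Set ℝ) (x z : ℝ → ℝ)
    (hz : ContinuousOn z I)
    (hx : ∀ t ∈ I, HasDerivAt x (f t (x t) (z t)) t)
    (a b : ℝ → ℝ)
    (hadef : ∀ t, a t = ∫ h in (0:ℝ)..1, deriv (fun u => f t u (z t)) (h * x t))
    (hbdef : ∀ t, b t = ∫ h in (0:ℝ)..1, deriv (fun v => f t 0 v) (h * z t)) :
    (∀ t ∈ I, HasDerivAt x (a t * x t + b t * z t) t) ∧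
    (∀ t ∈ I, 0 < b t) :=
  linearization_along_solution_general f hfC1 hfb hfb' I x z hx a b hadef hbdef
end

section
/- Let η : ℝ → ℝ be continuous and strictly increasing with 0 < t − η(t) ≤ r for all t. Suppose y⁰, …, y^N : ℝ → ℝ are C¹ and satisfy ẏ^i(t) = c^i(t)y^{i+1}(t) (0 ≤ i ≤ N−1) and ẏ^N(t) = c^N(t)y⁰(η(t)) for all t, where each c^i (0 ≤ i ≤ N−1) is continuous and nonvanishing and c^N is continuous and nonvanishing. If σ ∈ ℝ is an infinite oscillation point of y⁰ (i.e., there is a strictly monotone sequence t_n → σ with y⁰(t_n)y⁰(t_{n+1}) < 0 for all n), then y^i(σ) = 0 for all 0 ≤ i ≤ N, and η(σ) is also an infinite oscillation point of y⁰. -/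
/-!
Between two consecutive sign changes of `u` the mean value theorem produces a point where `u'`
has the sign of the increment of `u`; these increments alternate in sign, so `u'` oscillates
infinitely at the same point. Multiplying by a continuous nonvanishing coefficient does not
change signs, so the oscillation travels along the cycle `y⁰ → y¹ → ⋯ → yᴺ → y⁰ ∘ η`, and a
continuous strictly increasing `η` carries it from `σ` to `η σ`. Continuity makes every
component vanish at an infinite oscillation point.
-/

open Set Filter

/-- `σ` is an infinite oscillation point of `u`: there is a strictly monotone
sequence `t_n → σ` along which `u` keeps changing sign. -/
def IsIOP (u : ℝ → ℝ) (σ : ℝ) : Prop :=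
  ∃ t : ℕ → ℝ, (StrictMono t ∨ StrictAnti t) ∧
    Tendsto t atTop (nhds σ) ∧ ∀ n, u (t n) * u (t (n + 1)) < 0

lemma sub_mul_sub_neg_of_mul_neg {a b c : ℝ} (hab : a * b < 0) (hbc : b * c < 0) :
    (b - a) * (c - b) < 0 := by
  nlinarith [mul_pos_of_neg_of_neg hab hbc, sq_nonneg b]

lemma mul_pos_of_continuous_of_ne_zero {X : Type*} [TopologicalSpace X] [PreconnectedSpace X]
    {c : X → ℝ} (hc : Continuous c) (hne : ∀ x, c x ≠ 0) (a b : X) : 0 < c a * c b := by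
  by_contra! h
  obtain ⟨x, hx⟩ : (0 : ℝ) ∈ range c := by
    rcases mul_nonpos_iff.1 h with ⟨ha, hb⟩ | ⟨ha, hb⟩
    · exact mem_range_of_exists_le_of_exists_ge hc ⟨b, hb⟩ ⟨a, ha⟩
    · exact mem_range_of_exists_le_of_exists_ge hc ⟨a, ha⟩ ⟨b, hb⟩
  exact hne x hx

lemma exists_mem_uIoo_hasDerivAt_eq_slope {u d : ℝ → ℝ} (hd : ∀ t, HasDerivAt u (d t) t)
    {a b : ℝ} (hab : a ≠ b) : ∃ ξ ∈ uIoo a b, d ξ = (u b - u a) / (b - a) := by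
  have hu : Continuous u := continuous_iff_continuousAt.2 fun t => (hd t).continuousAt
  rcases hab.lt_or_gt with h | h
  · rw [uIoo_of_lt h]
    exact exists_hasDerivAt_eq_slope u d h hu.continuousOn fun t _ => hd t
  · rw [uIoo_of_gt h, ← neg_div_neg_eq, neg_sub, neg_sub]
    exact exists_hasDerivAt_eq_slope u d h hu.continuousOn fun t _ => hd t

lemma strictMono_or_strictAnti_of_mem_uIoo {t ξ : ℕ → ℝ} (ht : StrictMono t ∨ StrictAnti t)
    (hξ : ∀ n, ξ n ∈ uIoo (t n) (t (n + 1))) : StrictMono ξ ∨ StrictAnti ξ := by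
  rcases ht with ht | ht
  · refine .inl (strictMono_nat_of_lt_succ fun n => ?_)
    have h₀ := hξ n
    have h₁ := hξ (n + 1)
    rw [uIoo_of_lt (ht n.lt_succ_self)] at h₀
    rw [uIoo_of_lt (ht (n + 1).lt_succ_self)] at h₁
    exact h₀.2.trans h₁.1
  · refine .inr (strictAnti_nat_of_succ_lt fun n => ?_)
    have h₀ := hξ n
    have h₁ := hξ (n + 1)
    rw [uIoo_of_gt (ht n.lt_succ_self)] at h₀
    rw [uIoo_of_gt (ht (n + 1).lt_succ_self)] at h₁
    exact h₁.2.trans h₀.1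

namespace IsIOP

variable {u : ℝ → ℝ} {σ : ℝ}

theorem apply_eq_zero (hu : ContinuousAt u σ) (h : IsIOP u σ) : u σ = 0 := by
  obtain ⟨t, -, ht_lim, ht_sign⟩ := h
  have hlim : Tendsto (fun n => u (t n) * u (t (n + 1))) atTop (nhds (u σ * u σ)) :=
    (hu.tendsto.comp ht_lim).mul (hu.tendsto.comp (ht_lim.comp (tendsto_add_atTop_nat 1)))
  exact mul_self_eq_zero.1
    (le_antisymm (le_of_tendsto' hlim fun n => (ht_sign n).le) (mul_self_nonneg _))

theorem of_hasDerivAt {d : ℝ → ℝ} (hd : ∀ t, HasDerivAt u (d t) t) (h : IsIOP u σ) :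
    IsIOP d σ := by
  obtain ⟨t, ht_mono, ht_lim, ht_sign⟩ := h
  have ht_ne : ∀ n, t n ≠ t (n + 1) := by
    rcases ht_mono with ht | ht
    exacts [fun n => (ht n.lt_succ_self).ne, fun n => (ht n.lt_succ_self).ne']
  choose ξ hξ hξd using fun n => exists_mem_uIoo_hasDerivAt_eq_slope hd (ht_ne n)
  refine ⟨ξ, strictMono_or_strictAnti_of_mem_uIoo ht_mono hξ, ?_, fun n => ?_⟩
  · have ht_lim' := ht_lim.comp (tendsto_add_atTop_nat 1)
    exact tendsto_of_tendsto_of_tendsto_of_le_of_le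
      (by simpa using ht_lim.min ht_lim') (by simpa using ht_lim.max ht_lim')
      (fun n => (hξ n).1.le) (fun n => (hξ n).2.le)
  · have ht_steps : 0 < (t (n + 1) - t n) * (t (n + 1 + 1) - t (n + 1)) := by
      rcases ht_mono with ht | ht
      · exact mul_pos (sub_pos.2 (ht n.lt_succ_self)) (sub_pos.2 (ht (n + 1).lt_succ_self))
      · exact mul_pos_of_neg_of_neg (sub_neg.2 (ht n.lt_succ_self))
          (sub_neg.2 (ht (n + 1).lt_succ_self))
    rw [hξd, hξd, div_mul_div_comm]
    exact div_neg_of_neg_of_pos (sub_mul_sub_neg_of_mul_neg (ht_sign n) (ht_sign (n + 1)))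
      ht_steps

theorem of_mul_left {c : ℝ → ℝ} (hc : Continuous c) (hne : ∀ t, c t ≠ 0)
    (h : IsIOP (fun t => c t * u t) σ) : IsIOP u σ := by
  obtain ⟨t, ht_mono, ht_lim, ht_sign⟩ := h
  refine ⟨t, ht_mono, ht_lim, fun n => ?_⟩
  refine neg_of_mul_neg_right (a := c (t n) * c (t (n + 1))) ?_
    (mul_pos_of_continuous_of_ne_zero hc hne _ _).le
  simpa only [mul_mul_mul_comm] using ht_sign n

theorem of_comp {η : ℝ → ℝ} (hη : ContinuousAt η σ) (hηm : StrictMono η)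
    (h : IsIOP (fun t => u (η t)) σ) : IsIOP u (η σ) := by
  obtain ⟨t, ht_mono, ht_lim, ht_sign⟩ := h
  refine ⟨η ∘ t, ?_, hη.tendsto.comp ht_lim, ht_sign⟩
  rcases ht_mono with ht | ht
  exacts [.inl (hηm.comp ht), .inr (hηm.comp_strictAnti ht)]

end IsIOP

theorem iop_propagates_general (N : ℕ) (η : ℝ → ℝ)
    (hηc : Continuous η) (hηm : StrictMono η)
    (y c : Fin (N + 1) → ℝ → ℝ)
    (hc : ∀ i, Continuous (c i)) (hcne : ∀ i t, c i t ≠ 0)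
    (hsys : ∀ t : ℝ, ∀ i : Fin N,
      HasDerivAt (y i.castSucc) (c i.castSucc t * y i.succ t) t)
    (hsysN : ∀ t : ℝ, HasDerivAt (y (Fin.last N)) (c (Fin.last N) t * y 0 (η t)) t)
    (σ : ℝ) (hσ : IsIOP (y 0) σ) :
    (∀ i, y i σ = 0) ∧ IsIOP (y 0) (η σ) := by
  have hy : ∀ i, IsIOP (y i) σ := by
    intro i
    induction i using Fin.induction with
    | zero => exact hσ
    | succ j ih => exact (ih.of_hasDerivAt (hsys · j)).of_mul_left (hc _) (hcne _)
  have hy_cont : ∀ i, ContinuousAt (y i) σ := by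
    intro i
    induction i using Fin.lastCases with
    | last => exact (hsysN σ).continuousAt
    | cast j => exact (hsys σ j).continuousAt
  refine ⟨fun i => (hy i).apply_eq_zero (hy_cont i), ?_⟩
  exact (((hy (Fin.last N)).of_hasDerivAt hsysN).of_mul_left (hc _) (hcne _)).of_comp
    hηc.continuousAt hηm

/-- An infinite oscillation point of `y⁰` forces all components of the cyclic
linear delay system to vanish there, and `η(σ)` is again an infinite
oscillation point of `y⁰`. -/
theorem iop_propagates (N : ℕ) (η : ℝ → ℝ)
    (hηc : Continuous η) (hηm : StrictMono η) (r : ℝ)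
    (hητ : ∀ t, 0 < t - η t ∧ t - η t ≤ r)
    (y c : Fin (N + 1) → ℝ → ℝ)
    (hc : ∀ i, Continuous (c i)) (hcne : ∀ i t, c i t ≠ 0)
    (hsys : ∀ t : ℝ, ∀ i : Fin N,
      HasDerivAt (y i.castSucc) (c i.castSucc t * y i.succ t) t)
    (hsysN : ∀ t : ℝ, HasDerivAt (y (Fin.last N)) (c (Fin.last N) t * y 0 (η t)) t)
    (σ : ℝ) (hσ : IsIOP (y 0) σ) :
    (∀ i, y i σ = 0) ∧ IsIOP (y 0) (η σ) :=
  iop_propagates_general N η hηc hηm y c hc hcne hsys hsysN σ hσ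
end

section
/- Let u : I → ℝ be C¹ on an interval I and let σ ∈ I be an accumulation point of a strictly monotone sequence (t_n) in I with t_n → σ and u(t_n)u(t_{n+1}) < 0 for all n. Then there exists a strictly monotone sequence (s_n) in I with s_n → σ and u'(s_n)u'(s_{n+1}) < 0 for all n; moreover u(σ) = 0 and u'(σ) = 0. -/
/-!
Between consecutive oscillation points `t n`, `t (n + 1)` the function `u` has a zero `z`, and the
mean value theorem on `[z, t (n + 1)]` gives a point where `u'` has the sign of `u (t (n + 1))`;
these signs alternate. Decreasing sequences reduce to increasing ones under `x ↦ -x`. The values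
`u σ` and `u' σ` are limits of sequences whose consecutive products are negative, hence `0`.
-/

open Set Filter Topology

theorem eq_zero_of_tendsto_of_mul_succ_neg {f : ℕ → ℝ} {a : ℝ} (hf : Tendsto f atTop (𝓝 a))
    (h : ∀ n, f n * f (n + 1) < 0) : a = 0 := by
  have hprod : Tendsto (fun n => f n * f (n + 1)) atTop (𝓝 (a * a)) :=
    hf.mul (hf.comp (tendsto_add_atTop_nat 1))
  have : a * a ≤ 0 := le_of_tendsto' hprod fun n => (h n).le
  nlinarith [mul_self_nonneg a]

theorem exists_mem_Ioo_zero_lt_deriv_mul_of_mul_neg {u u' : ℝ → ℝ} {x y : ℝ} (hxy : x < y)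
    (hcont : ContinuousOn u (Icc x y)) (hderiv : ∀ z ∈ Ioo x y, HasDerivAt u (u' z) z)
    (hsign : u x * u y < 0) : ∃ a ∈ Ioo x y, 0 < u' a * u y := by
  obtain ⟨z, hz, huz⟩ : ∃ z ∈ Ioo x y, u z = 0 := by
    rcases lt_or_gt_of_ne (left_ne_zero_of_mul hsign.ne) with hx | hx
    · exact intermediate_value_Ioo hxy.le hcont ⟨hx, by nlinarith⟩
    · exact intermediate_value_Ioo' hxy.le hcont ⟨by nlinarith, hx⟩
  obtain ⟨a, ha, hslope⟩ := exists_hasDerivAt_eq_slope u u' hz.2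
    (hcont.mono (Icc_subset_Icc hz.1.le le_rfl))
    (fun w hw => hderiv w ⟨hz.1.trans hw.1, hw.2⟩)
  refine ⟨a, ⟨hz.1.trans ha.1, ha.2⟩, ?_⟩
  rw [hslope, huz, sub_zero, div_mul_eq_mul_div]
  exact div_pos (mul_self_pos.mpr (right_ne_zero_of_mul hsign.ne)) (sub_pos.mpr hz.2)

theorem exists_strictMono_tendsto_deriv_mul_succ_neg {I : Set ℝ} (hI : I.OrdConnected)
    {u u' : ℝ → ℝ} (hderiv : ∀ x ∈ I, HasDerivAt u (u' x) x) {t : ℕ → ℝ} {σ : ℝ}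
    (htI : ∀ n, t n ∈ I) (ht : StrictMono t) (hlim : Tendsto t atTop (𝓝 σ))
    (hosc : ∀ n, u (t n) * u (t (n + 1)) < 0) :
    ∃ s : ℕ → ℝ, (∀ n, s n ∈ I) ∧ StrictMono s ∧ Tendsto s atTop (𝓝 σ) ∧
      ∀ n, u' (s n) * u' (s (n + 1)) < 0 := by
  have hsub n : Icc (t n) (t (n + 1)) ⊆ I := hI.out (htI n) (htI (n + 1))
  have hstep n : ∃ a ∈ Ioo (t n) (t (n + 1)), 0 < u' a * u (t (n + 1)) :=
    exists_mem_Ioo_zero_lt_deriv_mul_of_mul_neg (ht n.lt_succ_self)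
      (fun z hz => (hderiv z (hsub n hz)).continuousAt.continuousWithinAt)
      (fun z hz => hderiv z (hsub n (Ioo_subset_Icc_self hz))) (hosc n)
  choose s hs hsign using hstep
  refine ⟨s, fun n => hsub n (Ioo_subset_Icc_self (hs n)),
    strictMono_nat_of_lt_succ fun n => (hs n).2.trans (hs (n + 1)).1,
    tendsto_of_tendsto_of_tendsto_of_le_of_le hlim (hlim.comp (tendsto_add_atTop_nat 1))
      (fun n => (hs n).1.le) (fun n => (hs n).2.le), fun n => ?_⟩
  nlinarith [mul_pos (hsign n) (hsign (n + 1)), hosc (n + 1)]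

theorem exists_strictAnti_tendsto_deriv_mul_succ_neg {I : Set ℝ} (hI : I.OrdConnected)
    {u u' : ℝ → ℝ} (hderiv : ∀ x ∈ I, HasDerivAt u (u' x) x) {t : ℕ → ℝ} {σ : ℝ}
    (htI : ∀ n, t n ∈ I) (ht : StrictAnti t) (hlim : Tendsto t atTop (𝓝 σ))
    (hosc : ∀ n, u (t n) * u (t (n + 1)) < 0) :
    ∃ s : ℕ → ℝ, (∀ n, s n ∈ I) ∧ StrictAnti s ∧ Tendsto s atTop (𝓝 σ) ∧
      ∀ n, u' (s n) * u' (s (n + 1)) < 0 := by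
  have hderiv_neg : ∀ x ∈ Neg.neg ⁻¹' I, HasDerivAt (fun x => u (-x)) (-u' (-x)) x := by
    intro x hx
    have := (hderiv (-x) hx).comp x (hasDerivAt_neg x)
    rwa [mul_neg_one] at this
  obtain ⟨s, hsI, hs, hslim, hsosc⟩ := exists_strictMono_tendsto_deriv_mul_succ_neg
    (hI.preimage_anti fun _ _ h => neg_le_neg h) hderiv_neg (t := fun n => -t n)
    (by simpa using htI) ht.neg hlim.neg (by simpa using hosc)
  refine ⟨fun n => -s n, hsI, hs.neg, by simpa using hslim.neg, fun n => ?_⟩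
  simpa using hsosc n

/-- The mean value theorem step: infinite oscillation of a `C¹` function at `σ`
produces infinite oscillation of its derivative at `σ`, and both vanish there. -/
theorem iop_of_deriv (I : Set ℝ) (hI : I.OrdConnected)
    (u u' : ℝ → ℝ)
    (hderiv : ∀ t ∈ I, HasDerivAt u (u' t) t)
    (hcont : ContinuousOn u' I)
    (σ : ℝ) (hσ : σ ∈ I)
    (t : ℕ → ℝ) (htI : ∀ n, t n ∈ I)
    (hmono : StrictMono t ∨ StrictAnti t)
    (hlim : Tendsto t atTop (nhds σ))
    (hosc : ∀ n, u (t n) * u (t (n + 1)) < 0) :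
    (∃ s : ℕ → ℝ, (∀ n, s n ∈ I) ∧ (StrictMono s ∨ StrictAnti s) ∧
      Tendsto s atTop (nhds σ) ∧ ∀ n, u' (s n) * u' (s (n + 1)) < 0) ∧
    u σ = 0 ∧ u' σ = 0 := by
  obtain ⟨s, hsI, hs, hslim, hsosc⟩ : ∃ s : ℕ → ℝ, (∀ n, s n ∈ I) ∧
      (StrictMono s ∨ StrictAnti s) ∧ Tendsto s atTop (𝓝 σ) ∧
      ∀ n, u' (s n) * u' (s (n + 1)) < 0 := by
    rcases hmono with ht | ht
    · obtain ⟨s, hsI, hs, hslim, hsosc⟩ :=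
        exists_strictMono_tendsto_deriv_mul_succ_neg hI hderiv htI ht hlim hosc
      exact ⟨s, hsI, Or.inl hs, hslim, hsosc⟩
    · obtain ⟨s, hsI, hs, hslim, hsosc⟩ :=
        exists_strictAnti_tendsto_deriv_mul_succ_neg hI hderiv htI ht hlim hosc
      exact ⟨s, hsI, Or.inr hs, hslim, hsosc⟩
  have hu'lim : Tendsto (fun n => u' (s n)) atTop (𝓝 (u' σ)) :=
    (hcont σ hσ).tendsto.comp (tendsto_nhdsWithin_iff.mpr ⟨hslim, .of_forall hsI⟩)
  exact ⟨⟨s, hsI, hs, hslim, hsosc⟩,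
    eq_zero_of_tendsto_of_mul_succ_neg ((hderiv σ hσ).continuousAt.tendsto.comp hlim) hosc,
    eq_zero_of_tendsto_of_mul_succ_neg hu'lim hsosc⟩
end

section
/- Under the setup of the implicit two-value delay: R : ℝ^{N+1} × ℝ → (0, r] Lipschitz with constants L_{R1} (vector argument) and L_{R2} (scalar argument), L_{R2}L₀ < 1, and τ(u, φ) defined as the unique fixed point of s ↦ R(u, φ(−s)) for u ∈ ℝ^{N+1} and L₀-Lipschitz φ : [-r,0] → ℝ. Then for all u, v ∈ ℝ^{N+1} and L₀-Lipschitz φ, ψ, one has |τ(u, φ) − τ(v, ψ)| ≤ (L_{R1}‖u − v‖_∞ + L_{R2}‖φ − ψ‖_∞ ) / (1 − L_{R2}L₀) + (L_{R2}L₀/(1 − L_{R2}L₀))·0, i.e., |τ(u, φ) − τ(v, ψ)| ≤ (L_{R1} + L_{R2})·max(‖u − v‖_∞, ‖φ − ψ‖_∞) / (1 − L_{R2}L₀). -/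
/-!
Subtracting the two fixed-point equations τ₁ = R(u, φ(-τ₁)) and τ₂ = R(v, ψ(-τ₂)) and passing
through R(v, φ(-τ₁)) and R(v, φ(-τ₂)) bounds |τ₁ - τ₂| by
L_{R1}‖u - v‖ + L_{R2}L₀|τ₁ - τ₂| + L_{R2}|φ(-τ₂) - ψ(-τ₂)|; since L_{R2}L₀ < 1 the middle term
can be absorbed on the left. The last term is at most the supremum of |φ - ψ| over [-r, 0],
which is finite because Lipschitz functions are bounded on a compact interval.
-/

open Set

lemma continuousOn_of_abs_sub_le {f : ℝ → ℝ} {s : Set ℝ} {L : ℝ}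
    (h : ∀ x ∈ s, ∀ y ∈ s, |f x - f y| ≤ L * |x - y|) : ContinuousOn f s :=
  (LipschitzOnWith.of_dist_le' (K := L) (by simpa only [Real.dist_eq] using h)).continuousOn

lemma abs_sub_le_iSup_of_continuousOn {X : Type*} [TopologicalSpace X] {S : Set X}
    (hS : IsCompact S) {f g : X → ℝ} (hf : ContinuousOn f S) (hg : ContinuousOn g S)
    {x : X} (hx : x ∈ S) : |f x - g x| ≤ ⨆ s : S, |f s - g s| := by
  have hbdd := hS.bddAbove_image (hf.sub hg).abs
  rw [image_eq_range] at hbdd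
  exact le_ciSup hbdd ⟨x, hx⟩

lemma abs_sub_le_of_fixedPoint {E : Type*} [SeminormedAddCommGroup E]
    {R : E → ℝ → ℝ} {φ ψ : ℝ → ℝ} {L0 LR1 LR2 δ : ℝ} {u v : E} {τ₁ τ₂ : ℝ}
    (hLR2 : 0 ≤ LR2) (hsmall : LR2 * L0 < 1)
    (hRLip1 : ∀ u v : E, ∀ y : ℝ, |R u y - R v y| ≤ LR1 * ‖u - v‖)
    (hRLip2 : ∀ u : E, ∀ y₁ y₂ : ℝ, |R u y₁ - R u y₂| ≤ LR2 * |y₁ - y₂|)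
    (hφ : |φ (-τ₁) - φ (-τ₂)| ≤ L0 * |τ₁ - τ₂|) (hδ : |φ (-τ₂) - ψ (-τ₂)| ≤ δ)
    (hτ₁ : R u (φ (-τ₁)) = τ₁) (hτ₂ : R v (ψ (-τ₂)) = τ₂) :
    |τ₁ - τ₂| ≤ (LR1 * ‖u - v‖ + LR2 * δ) / (1 - LR2 * L0) := by
  have hdelay : |R v (φ (-τ₁)) - R v (φ (-τ₂))| ≤ LR2 * L0 * |τ₁ - τ₂| :=
    calc _ ≤ LR2 * |φ (-τ₁) - φ (-τ₂)| := hRLip2 v _ _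
      _ ≤ LR2 * (L0 * |τ₁ - τ₂|) := by gcongr
      _ = LR2 * L0 * |τ₁ - τ₂| := by ring
  have hhistory : |R v (φ (-τ₂)) - R v (ψ (-τ₂))| ≤ LR2 * δ :=
    (hRLip2 v _ _).trans (by gcongr)
  have hsplit : |τ₁ - τ₂| ≤ LR1 * ‖u - v‖ + LR2 * L0 * |τ₁ - τ₂| + LR2 * δ :=
    calc |τ₁ - τ₂| = |R u (φ (-τ₁)) - R v (ψ (-τ₂))| := by rw [hτ₁, hτ₂]
      _ ≤ |R u (φ (-τ₁)) - R v (φ (-τ₁))| + |R v (φ (-τ₁)) - R v (φ (-τ₂))|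
          + |R v (φ (-τ₂)) - R v (ψ (-τ₂))| :=
        (abs_sub_le _ (R v (φ (-τ₂))) _).trans (add_le_add_left (abs_sub_le _ _ _) _)
      _ ≤ _ := by linarith [hRLip1 u v (φ (-τ₁))]
  rw [le_div_iff₀ (by linarith)]
  linarith

theorem implicit_delay_lipschitz_general (N : ℕ) (r L0 LR1 LR2 : ℝ)
    (hLR1 : 0 ≤ LR1) (hLR2 : 0 ≤ LR2)
    (hsmall : LR2 * L0 < 1)
    (R : (Fin (N + 1) → ℝ) → ℝ → ℝ)
    (hRLip1 : ∀ u v : Fin (N + 1) → ℝ, ∀ y : ℝ, |R u y - R v y| ≤ LR1 * ‖u - v‖)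
    (hRLip2 : ∀ u : Fin (N + 1) → ℝ, ∀ y₁ y₂ : ℝ, |R u y₁ - R u y₂| ≤ LR2 * |y₁ - y₂|)
    (φ ψ : ℝ → ℝ)
    (hφ : ∀ s₁ ∈ Set.Icc (-r) 0, ∀ s₂ ∈ Set.Icc (-r) 0, |φ s₁ - φ s₂| ≤ L0 * |s₁ - s₂|)
    (hψ : ∀ s₁ ∈ Set.Icc (-r) 0, ∀ s₂ ∈ Set.Icc (-r) 0, |ψ s₁ - ψ s₂| ≤ L0 * |s₁ - s₂|)
    (u v : Fin (N + 1) → ℝ) (τ₁ τ₂ : ℝ)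
    (hτ₁ : τ₁ ∈ Set.Ioc 0 r ∧ R u (φ (-τ₁)) = τ₁)
    (hτ₂ : τ₂ ∈ Set.Ioc 0 r ∧ R v (ψ (-τ₂)) = τ₂) :
    |τ₁ - τ₂| ≤ (LR1 + LR2) *
      max ‖u - v‖ (⨆ s : Set.Icc (-r) (0:ℝ), |φ ↑s - ψ ↑s|) / (1 - LR2 * L0) := by
  obtain ⟨⟨hτ₁pos, hτ₁le⟩, hfix₁⟩ := hτ₁
  obtain ⟨⟨hτ₂pos, hτ₂le⟩, hfix₂⟩ := hτ₂
  have hmem₁ : -τ₁ ∈ Icc (-r) 0 := ⟨neg_le_neg hτ₁le, by linarith⟩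
  have hmem₂ : -τ₂ ∈ Icc (-r) 0 := ⟨neg_le_neg hτ₂le, by linarith⟩
  set M := ⨆ s : Icc (-r) (0:ℝ), |φ ↑s - ψ ↑s|
  have hM : |φ (-τ₂) - ψ (-τ₂)| ≤ M :=
    abs_sub_le_iSup_of_continuousOn isCompact_Icc (continuousOn_of_abs_sub_le hφ)
      (continuousOn_of_abs_sub_le hψ) hmem₂
  have hφτ : |φ (-τ₁) - φ (-τ₂)| ≤ L0 * |τ₁ - τ₂| := by
    simpa only [neg_sub_neg, abs_sub_comm τ₂] using hφ _ hmem₁ _ hmem₂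
  calc |τ₁ - τ₂| ≤ (LR1 * ‖u - v‖ + LR2 * M) / (1 - LR2 * L0) :=
        abs_sub_le_of_fixedPoint hLR2 hsmall hRLip1 hRLip2 hφτ hM hfix₁ hfix₂
    _ ≤ (LR1 + LR2) * max ‖u - v‖ M / (1 - LR2 * L0) := by
        have : 0 < 1 - LR2 * L0 := by linarith
        rw [add_mul]
        gcongr
        exacts [le_max_left _ _, le_max_right _ _]

/-- Lipschitz estimate for the implicit two-value delay, as a function of the
present value vector and the history segment. -/
theorem implicit_delay_lipschitz (N : ℕ) (r L0 LR1 LR2 : ℝ)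
    (hr : 0 < r) (hL0 : 0 < L0) (hLR1 : 0 ≤ LR1) (hLR2 : 0 ≤ LR2)
    (hsmall : LR2 * L0 < 1)
    (R : (Fin (N + 1) → ℝ) → ℝ → ℝ)
    (hRmem : ∀ u y, R u y ∈ Set.Ioc 0 r)
    (hRLip1 : ∀ u v : Fin (N + 1) → ℝ, ∀ y : ℝ, |R u y - R v y| ≤ LR1 * ‖u - v‖)
    (hRLip2 : ∀ u : Fin (N + 1) → ℝ, ∀ y₁ y₂ : ℝ, |R u y₁ - R u y₂| ≤ LR2 * |y₁ - y₂|)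
    (φ ψ : ℝ → ℝ)
    (hφ : ∀ s₁ ∈ Set.Icc (-r) 0, ∀ s₂ ∈ Set.Icc (-r) 0, |φ s₁ - φ s₂| ≤ L0 * |s₁ - s₂|)
    (hψ : ∀ s₁ ∈ Set.Icc (-r) 0, ∀ s₂ ∈ Set.Icc (-r) 0, |ψ s₁ - ψ s₂| ≤ L0 * |s₁ - s₂|)
    (u v : Fin (N + 1) → ℝ) (τ₁ τ₂ : ℝ)
    (hτ₁ : τ₁ ∈ Set.Ioc 0 r ∧ R u (φ (-τ₁)) = τ₁)
    (hτ₂ : τ₂ ∈ Set.Ioc 0 r ∧ R v (ψ (-τ₂)) = τ₂) :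
    |τ₁ - τ₂| ≤ (LR1 + LR2) *
      max ‖u - v‖ (⨆ s : Set.Icc (-r) (0:ℝ), |φ ↑s - ψ ↑s|) / (1 - LR2 * L0) :=
  implicit_delay_lipschitz_general N r L0 LR1 LR2 hLR1 hLR2 hsmall R hRLip1 hRLip2 φ ψ hφ hψ u v τ₁
    τ₂ hτ₁ hτ₂
end

section
/- Let r > 0, L₀ > 0, and R : ℝ^{N+1} × ℝ → (0, r] be Lipschitz with constants L_{R1}, L_{R2} satisfying (L_{R1} + 2L_{R2})/(1) < 1/L₀, in particular (L_{R1} + L_{R2})L₀/(1 − L_{R2}L₀) < 1. Let x : ℝ → ℝ^{N+1} be such that each component is L₀-Lipschitz, and define τ(t) as the unique fixed point of s ↦ R(x(t), x⁰(t − s)) and η(t) = t − τ(t). Then η is strictly increasing on ℝ. -/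
/-! Writing `τ t - τ s` through the fixed-point equations and splitting it into a change of the
first argument of `R` and a change of the second gives
`|τ t - τ s| ≤ (LR1 + LR2) L0 |t - s| + LR2 L0 |τ t - τ s|`, since the delayed time moves by at most
`|t - s| + |τ t - τ s|`. As `(LR1 + 2 LR2) L0 < 1`, this forces `|τ t - τ s| < t - s` for `s < t`. -/

theorem norm_sub_le_of_forall_abs_apply_sub_le {ι : Type*} [Fintype ι] {x : ℝ → ι → ℝ} {L : ℝ}
    (hL : 0 ≤ L) (hx : ∀ i s t, |x s i - x t i| ≤ L * |s - t|) (s t : ℝ) :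
    ‖x s - x t‖ ≤ L * |s - t| :=
  (pi_norm_le_iff_of_nonneg (by positivity)).mpr fun i => hx i s t

theorem abs_sub_le_of_eq_delayed_fixedPoint {E : Type*} [SeminormedAddCommGroup E]
    {R : E → ℝ → ℝ} {LR1 LR2 Lx Ly : ℝ} (hLR1 : 0 ≤ LR1) (hLR2 : 0 ≤ LR2) (hLy : 0 ≤ Ly)
    (hRLip1 : ∀ u v y, |R u y - R v y| ≤ LR1 * ‖u - v‖)
    (hRLip2 : ∀ u y₁ y₂, |R u y₁ - R u y₂| ≤ LR2 * |y₁ - y₂|)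
    {x : ℝ → E} {y : ℝ → ℝ} (hx : ∀ s t, ‖x s - x t‖ ≤ Lx * |s - t|)
    (hy : ∀ a b, |y a - y b| ≤ Ly * |a - b|)
    {τ : ℝ → ℝ} (hτ : ∀ t, R (x t) (y (t - τ t)) = τ t) (s t : ℝ) :
    |τ t - τ s| ≤ (LR1 * Lx + LR2 * Ly) * |t - s| + LR2 * Ly * |τ t - τ s| := by
  have hfirst : |R (x t) (y (t - τ t)) - R (x s) (y (t - τ t))| ≤ LR1 * (Lx * |t - s|) :=
    (hRLip1 _ _ _).trans (mul_le_mul_of_nonneg_left (hx t s) hLR1)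
  have hdelayed : |(t - τ t) - (s - τ s)| ≤ |t - s| + |τ t - τ s| := by
    rw [show (t - τ t) - (s - τ s) = (t - s) - (τ t - τ s) by ring]
    exact abs_sub _ _
  have hsecond : |R (x s) (y (t - τ t)) - R (x s) (y (s - τ s))| ≤
      LR2 * (Ly * (|t - s| + |τ t - τ s|)) :=
    (hRLip2 _ _ _).trans <| mul_le_mul_of_nonneg_left
      ((hy _ _).trans (mul_le_mul_of_nonneg_left hdelayed hLy)) hLR2
  have hsplit : τ t - τ s = (R (x t) (y (t - τ t)) - R (x s) (y (t - τ t))) +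
      (R (x s) (y (t - τ t)) - R (x s) (y (s - τ s))) := by
    rw [hτ t, hτ s]; ring
  calc |τ t - τ s| ≤ LR1 * (Lx * |t - s|) + LR2 * (Ly * (|t - s| + |τ t - τ s|)) := by
        nth_rewrite 1 [hsplit]; exact (abs_add_le _ _).trans (add_le_add hfirst hsecond)
    _ = (LR1 * Lx + LR2 * Ly) * |t - s| + LR2 * Ly * |τ t - τ s| := by ring

theorem lt_of_le_mul_add_mul {a b d e : ℝ} (ha : 0 ≤ a) (hab : a + b < 1) (hd : 0 < d)
    (h : e ≤ a * d + b * e) : e < d := by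
  nlinarith

theorem implicit_delay_eta_strictMono_general (N : ℕ) (r L0 LR1 LR2 : ℝ)
    (hL0 : 0 < L0) (hLR1 : 0 ≤ LR1) (hLR2 : 0 ≤ LR2)
    (hsmall : LR1 + 2 * LR2 < 1 / L0)
    (R : (Fin (N + 1) → ℝ) → ℝ → ℝ)
    (hRLip1 : ∀ u v : Fin (N + 1) → ℝ, ∀ y : ℝ, |R u y - R v y| ≤ LR1 * ‖u - v‖)
    (hRLip2 : ∀ u : Fin (N + 1) → ℝ, ∀ y₁ y₂ : ℝ, |R u y₁ - R u y₂| ≤ LR2 * |y₁ - y₂|)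
    (x : ℝ → Fin (N + 1) → ℝ)
    (hx : ∀ i : Fin (N + 1), ∀ s t : ℝ, |x s i - x t i| ≤ L0 * |s - t|)
    (τ : ℝ → ℝ)
    (hτ : ∀ t, τ t ∈ Set.Ioc 0 r ∧ R (x t) (x (t - τ t) 0) = τ t) :
    StrictMono (fun t => t - τ t) := by
  have hcontract : (LR1 * L0 + LR2 * L0) + LR2 * L0 < 1 := by
    have := mul_lt_mul_of_pos_right hsmall hL0
    rw [one_div_mul_cancel hL0.ne'] at this
    linarith
  have hτLip := abs_sub_le_of_eq_delayed_fixedPoint hLR1 hLR2 hL0.le hRLip1 hRLip2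
    (norm_sub_le_of_forall_abs_apply_sub_le hL0.le hx) (hx 0) (fun t => (hτ t).2)
  intro s t hst
  have hτlt : |τ t - τ s| < t - s := by
    refine lt_of_le_mul_add_mul (by positivity) hcontract (sub_pos.mpr hst) ?_
    simpa only [abs_of_pos (sub_pos.mpr hst)] using hτLip s t
  linarith [le_abs_self (τ t - τ s)]

/-- For the implicit two-value state-dependent delay along a Lipschitz solution,
the delayed time `η(t) = t − τ(t)` is strictly increasing. -/
theorem implicit_delay_eta_strictMono (N : ℕ) (r L0 LR1 LR2 : ℝ)
    (hr : 0 < r) (hL0 : 0 < L0) (hLR1 : 0 ≤ LR1) (hLR2 : 0 ≤ LR2)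
    (hsmall : LR1 + 2 * LR2 < 1 / L0)
    (R : (Fin (N + 1) → ℝ) → ℝ → ℝ)
    (hRmem : ∀ u y, R u y ∈ Set.Ioc 0 r)
    (hRLip1 : ∀ u v : Fin (N + 1) → ℝ, ∀ y : ℝ, |R u y - R v y| ≤ LR1 * ‖u - v‖)
    (hRLip2 : ∀ u : Fin (N + 1) → ℝ, ∀ y₁ y₂ : ℝ, |R u y₁ - R u y₂| ≤ LR2 * |y₁ - y₂|)
    (x : ℝ → Fin (N + 1) → ℝ)
    (hx : ∀ i : Fin (N + 1), ∀ s t : ℝ, |x s i - x t i| ≤ L0 * |s - t|)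
    (τ : ℝ → ℝ)
    (hτ : ∀ t, τ t ∈ Set.Ioc 0 r ∧ R (x t) (x (t - τ t) 0) = τ t) :
    StrictMono (fun t => t - τ t) :=
  implicit_delay_eta_strictMono_general N r L0 LR1 LR2 hL0 hLR1 hLR2 hsmall R hRLip1 hRLip2 x hx τ
    hτ
end

section
/- Let L > 0, C > 0, r > 0, let η : ℝ → ℝ be such that every iterate η^k is L-Lipschitz, and let σ ∈ ℝ. Suppose z_k : [0, r] → ℝ^{N+1} (k ∈ ℕ) are continuous functions, uniformly bounded, with z_k(0) = 0 for all k, satisfying for all t ∈ [0, r] and all k: |z_k^i(t)| ≤ C·L·∫₀^t (|z_k^i(s)| + |z_k^{i+1}(s)|) ds for 0 ≤ i ≤ N−1, and |z_k^N(t)| ≤ C·L·∫₀^t (|z_k^N(s)| + |z_{k+1}^0(s)|) ds. Then z_k(t) = 0 for all k ∈ ℕ and all t ∈ [0, r]. -/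
/-!
Iterate the integral inequality: if every function of the family is bounded by `M` on `[0, r]`,
then `n` substitutions bound each of them by `M (2K)ⁿ tⁿ / n!`, which tends to `0`. Working with
these Picard-type bounds for all functions at once avoids the supremum over the family, which
need not be continuous or even measurable.
-/

open Set intervalIntegral
open scoped Nat

theorem integral_pow_div_factorial (t : ℝ) (n : ℕ) :
    ∫ s in (0 : ℝ)..t, s ^ n / n ! = t ^ (n + 1) / (n + 1)! := by
  rw [intervalIntegral.integral_div, integral_pow, Nat.factorial_succ]
  push_cast
  field_simp
  ring

section PairwiseIntegralInequality

variable {ι : Type*} {f : ι → ℝ → ℝ} {K M r : ℝ}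

theorem abs_le_pow_div_factorial_of_abs_le_integral (hK : 0 ≤ K)
    (hcont : ∀ j, ContinuousOn (f j) (Icc 0 r)) (hM : ∀ j, ∀ t ∈ Icc 0 r, |f j t| ≤ M)
    (hle : ∀ j, ∃ a b, ∀ t ∈ Icc 0 r, |f j t| ≤ K * ∫ s in (0 : ℝ)..t, (|f a s| + |f b s|))
    (n : ℕ) : ∀ j, ∀ t ∈ Icc 0 r, |f j t| ≤ M * (2 * K) ^ n * (t ^ n / n !) := by
  induction n with
  | zero => simpa using hM
  | succ n ih =>
    intro j t ⟨ht0, htr⟩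
    obtain ⟨a, b, hab⟩ := hle j
    have hsub : uIcc 0 t ⊆ Icc 0 r := by
      rw [uIcc_of_le ht0]
      exact Icc_subset_Icc_right htr
    have hmono : ∫ s in (0 : ℝ)..t, (|f a s| + |f b s|) ≤
        ∫ s in (0 : ℝ)..t, 2 * M * (2 * K) ^ n * (s ^ n / n !) := by
      refine integral_mono_on ht0 ?_ ?_ fun s ⟨hs0, hst⟩ => ?_
      · exact ((((hcont a).mono hsub).abs).add ((hcont b).mono hsub).abs).intervalIntegrable
      · exact (Continuous.intervalIntegrable (by fun_prop) _ _)
      · have hs : s ∈ Icc 0 r := ⟨hs0, hst.trans htr⟩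
        linarith [ih a s hs, ih b s hs]
    calc |f j t| ≤ K * ∫ s in (0 : ℝ)..t, (|f a s| + |f b s|) := hab t ⟨ht0, htr⟩
      _ ≤ K * ∫ s in (0 : ℝ)..t, 2 * M * (2 * K) ^ n * (s ^ n / n !) := by gcongr
      _ = M * (2 * K) ^ (n + 1) * (t ^ (n + 1) / (n + 1)!) := by
        rw [intervalIntegral.integral_const_mul, integral_pow_div_factorial]
        ring

theorem eq_zero_of_abs_le_integral (hK : 0 ≤ K)
    (hcont : ∀ j, ContinuousOn (f j) (Icc 0 r)) (hM : ∀ j, ∀ t ∈ Icc 0 r, |f j t| ≤ M)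
    (hle : ∀ j, ∃ a b, ∀ t ∈ Icc 0 r, |f j t| ≤ K * ∫ s in (0 : ℝ)..t, (|f a s| + |f b s|))
    (j : ι) {t : ℝ} (ht : t ∈ Icc 0 r) : f j t = 0 := by
  have hbound : Filter.Tendsto (fun n : ℕ => M * (2 * K) ^ n * (t ^ n / n !))
      Filter.atTop (nhds 0) := by
    simpa only [mul_assoc, ← mul_div_assoc, ← mul_pow, mul_zero] using
      (FloorSemiring.tendsto_pow_div_factorial_atTop (2 * K * t)).const_mul M
  refine abs_nonpos_iff.mp (ge_of_tendsto' hbound fun n => ?_)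
  exact abs_le_pow_div_factorial_of_abs_le_integral hK hcont hM hle n j t ht

end PairwiseIntegralInequality

theorem infinite_gronwall_general (N : ℕ) (L C r : ℝ)
    (hL : 0 < L) (hC : 0 < C)
    (z : ℕ → ℝ → Fin (N + 1) → ℝ)
    (hzc : ∀ k, ∀ i : Fin (N + 1), ContinuousOn (fun t => z k t i) (Set.Icc 0 r))
    (hbdd : ∃ M : ℝ, ∀ k, ∀ t ∈ Set.Icc 0 r, ∀ i : Fin (N + 1), |z k t i| ≤ M)
    (hineq : ∀ k, ∀ t ∈ Set.Icc 0 r, ∀ i : Fin N,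
      |z k t i.castSucc| ≤
        C * L * ∫ s in (0:ℝ)..t, (|z k s i.castSucc| + |z k s i.succ|))
    (hineqN : ∀ k, ∀ t ∈ Set.Icc 0 r,
      |z k t (Fin.last N)| ≤
        C * L * ∫ s in (0:ℝ)..t, (|z k s (Fin.last N)| + |z (k + 1) s 0|)) :
    ∀ k, ∀ t ∈ Set.Icc 0 r, ∀ i : Fin (N + 1), z k t i = 0 := by
  obtain ⟨M, hM⟩ := hbdd
  let f : ℕ × Fin (N + 1) → ℝ → ℝ := fun p t => z p.1 t p.2
  have hle : ∀ p, ∃ a b, ∀ t ∈ Icc 0 r,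
      |f p t| ≤ C * L * ∫ s in (0 : ℝ)..t, (|f a s| + |f b s|) := by
    rintro ⟨k, i⟩
    induction i using Fin.lastCases with
    | last => exact ⟨(k, Fin.last N), (k + 1, 0), hineqN k⟩
    | cast i => exact ⟨(k, i.castSucc), (k, i.succ), fun t ht => hineq k t ht i⟩
  intro k t ht i
  exact eq_zero_of_abs_le_integral (mul_pos hC hL).le (fun p => hzc p.1 p.2)
    (fun p t ht => hM p.1 t ht p.2) hle (k, i) ht

/-- The infinite-dimensional Gronwall argument: a uniformly bounded sequence of
continuous vector functions vanishing at `0` and satisfying the coupled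
integral inequalities must vanish identically. -/
theorem infinite_gronwall (N : ℕ) (L C r : ℝ)
    (hL : 0 < L) (hC : 0 < C) (hr : 0 < r)
    (η : ℝ → ℝ) (σ : ℝ)
    (hη : ∀ k : ℕ, ∀ s t : ℝ, |η^[k] t - η^[k] s| ≤ L * |t - s|)
    (z : ℕ → ℝ → Fin (N + 1) → ℝ)
    (hzc : ∀ k, ∀ i : Fin (N + 1), ContinuousOn (fun t => z k t i) (Set.Icc 0 r))
    (hbdd : ∃ M : ℝ, ∀ k, ∀ t ∈ Set.Icc 0 r, ∀ i : Fin (N + 1), |z k t i| ≤ M)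
    (hz0 : ∀ k, ∀ i : Fin (N + 1), z k 0 i = 0)
    (hineq : ∀ k, ∀ t ∈ Set.Icc 0 r, ∀ i : Fin N,
      |z k t i.castSucc| ≤
        C * L * ∫ s in (0:ℝ)..t, (|z k s i.castSucc| + |z k s i.succ|))
    (hineqN : ∀ k, ∀ t ∈ Set.Icc 0 r,
      |z k t (Fin.last N)| ≤
        C * L * ∫ s in (0:ℝ)..t, (|z k s (Fin.last N)| + |z (k + 1) s 0|)) :
    ∀ k, ∀ t ∈ Set.Icc 0 r, ∀ i : Fin (N + 1), z k t i = 0 :=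
  infinite_gronwall_general N L C r hL hC z hzc hbdd hineq hineqN
end
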